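/- For every weighted majority game v there exist positive reals q̃, w̃_1, ..., w̃_{n−1} and α > 0 such that for all δ_0, ..., δ_{n−1} ∈ [−α, α], the tuple (q̃+δ_0, w̃_1+δ_1, ..., w̃_{n−1}+δ_{n−1}, 1 − Σ_{i=1}^{n−1}(w̃_i+δ_i)) is a normalized representation of v. In particular, the set of normalized representations of v has nonempty interior after eliminating the last weight coordinate. -/

import Mathlib

open Finset

/-- A simple game on `n` voters: monotone, with `∅` losing and the grand coalition winning. -/
def IsSimpleGame {n : ℕ} (v : Finset (Fin n) → Bool) : Prop :=
  v ∅ = false ∧ v Finset.univ = true ∧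
    ∀ S T : Finset (Fin n), S ⊆ T → v S = true → v T = true

/-- `(q, w)` is a representation of `v`: `q > 0`, nonnegative weights, and a coalition is
winning iff its total weight is at least `q` (hence losing iff strictly below `q`). -/
def IsRep {n : ℕ} (v : Finset (Fin n) → Bool) (q : ℝ) (w : Fin n → ℝ) : Prop :=
  0 < q ∧ (∀ i, 0 ≤ w i) ∧ ∀ S : Finset (Fin n), v S = true ↔ q ≤ ∑ i ∈ S, w i

/-- A weighted majority game is a simple game admitting a representation. -/
def IsWMG {n : ℕ} (v : Finset (Fin n) → Bool) : Prop :=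
  IsSimpleGame v ∧ ∃ (q : ℝ) (w : Fin n → ℝ), IsRep v q w


/-! Strict representations (positive weights, winning coalitions strictly above the quota)
form an open set of pairs (quota, weights), and each of them is a representation. Lowering
the quota and raising every weight of a representation by a small `t > 0` makes it strict,
and rescaling then normalizes the weights to sum `1`. The map `(δ₀, δ) ↦ (q̃ + δ₀, w̃ + δ)`,
with the last weight taking up the slack, is continuous, so it pulls this open set back to a
neighbourhood of `0`, which contains a box `[-α, α]ⁿ⁺¹`. -/

open Topology Filter

def IsStrictRep {n : ℕ} (v : Finset (Fin n) → Bool) (q : ℝ) (w : Fin n → ℝ) : Prop :=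
  0 < q ∧ (∀ i, 0 < w i) ∧
    ∀ S : Finset (Fin n), (v S = true → q < ∑ i ∈ S, w i) ∧ (v S = false → ∑ i ∈ S, w i < q)

section StrictRep

variable {n : ℕ} {v : Finset (Fin n) → Bool} {q : ℝ} {w : Fin n → ℝ}

theorem IsStrictRep.isRep (h : IsStrictRep v q w) : IsRep v q w := by
  refine ⟨h.1, fun i => (h.2.1 i).le, fun S => ⟨fun hS => ((h.2.2 S).1 hS).le, fun hle => ?_⟩⟩
  cases hS : v S
  · exact absurd ((h.2.2 S).2 hS) hle.not_gt
  · rfl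

theorem isOpen_setOf_isStrictRep (v : Finset (Fin n) → Bool) :
    IsOpen {p : ℝ × (Fin n → ℝ) | IsStrictRep v p.1 p.2} := by
  simp only [IsStrictRep, Set.ofPred_and, Set.ofPred_forall]
  refine (isOpen_lt continuous_const continuous_fst).inter
    ((isOpen_iInter_of_finite fun i => isOpen_lt continuous_const (by fun_prop)).inter
      (isOpen_iInter_of_finite fun S => ?_))
  cases v S <;> simpa using isOpen_lt (by fun_prop) (by fun_prop)

theorem IsStrictRep.div (h : IsStrictRep v q w) {t : ℝ} (ht : 0 < t) :
    IsStrictRep v (q / t) (fun i => w i / t) := by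
  refine ⟨div_pos h.1 ht, fun i => div_pos (h.2.1 i) ht, fun S => ?_⟩
  simp only [← Finset.sum_div]
  exact ⟨fun hS => div_lt_div_of_pos_right ((h.2.2 S).1 hS) ht,
    fun hS => div_lt_div_of_pos_right ((h.2.2 S).2 hS) ht⟩

theorem IsStrictRep.exists_sum_eq_one [NeZero n] (h : IsStrictRep v q w) :
    ∃ (q' : ℝ) (w' : Fin n → ℝ), IsStrictRep v q' w' ∧ ∑ i, w' i = 1 := by
  have hpos : 0 < ∑ i, w i := Finset.sum_pos (fun i _ => h.2.1 i) Finset.univ_nonempty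
  exact ⟨_, _, h.div hpos, by rw [← Finset.sum_div, div_self hpos.ne']⟩

/-- Losing coalitions lie strictly below the quota, so they stay below it after a small shift. -/
theorem IsRep.eventually_isStrictRep (h : IsRep v q w) :
    ∀ᶠ t in 𝓝[>] (0 : ℝ), IsStrictRep v (q - t) (fun i => w i + t) := by
  obtain ⟨hq, hw, hvw⟩ := h
  have hlose : ∀ S, v S = false → ∑ i ∈ S, (w i + 0) < q - 0 := fun S hS => by
    simpa using not_le.mp fun hle => by simp [(hvw S).2 hle] at hS
  have hnear : ∀ᶠ t in 𝓝 (0 : ℝ),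
      0 < q - t ∧ ∀ S, v S = false → ∑ i ∈ S, (w i + t) < q - t := by
    refine (ContinuousAt.eventually_lt (by fun_prop) (by fun_prop) (by simpa using hq)).and
      (Filter.eventually_all.2 fun S => ?_)
    cases hS : v S
    · exact (ContinuousAt.eventually_lt (by fun_prop) (by fun_prop) (hlose S hS)).mono
        fun _ h _ => h
    · exact .of_forall fun _ h => nomatch h
  filter_upwards [nhdsWithin_le_nhds hnear, self_mem_nhdsWithin] with t ⟨hqt, hlt⟩ (ht : 0 < t)
  refine ⟨hqt, fun i => by linarith [hw i], fun S => ⟨fun hS => ?_, hlt S⟩⟩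
  calc q - t < q := by linarith
    _ ≤ ∑ i ∈ S, w i := (hvw S).1 hS
    _ ≤ ∑ i ∈ S, (w i + t) := Finset.sum_le_sum fun i _ => by linarith

theorem IsRep.exists_isStrictRep_sum_eq_one [NeZero n] (h : IsRep v q w) :
    ∃ (q' : ℝ) (w' : Fin n → ℝ), IsStrictRep v q' w' ∧ ∑ i, w' i = 1 :=
  let ⟨_, ht⟩ := h.eventually_isStrictRep.exists
  ht.exists_sum_eq_one

end StrictRep

def appendSlack {n : ℕ} (u : Fin n → ℝ) : Fin (n + 1) → ℝ :=
  fun j => if h : (j : ℕ) < n then u ⟨j, h⟩ else 1 - ∑ i, u i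

section AppendSlack

variable {n : ℕ}

theorem appendSlack_castSucc (u : Fin n → ℝ) (i : Fin n) : appendSlack u i.castSucc = u i := by
  simp [appendSlack]

theorem appendSlack_last (u : Fin n → ℝ) : appendSlack u (Fin.last n) = 1 - ∑ i, u i := by
  simp [appendSlack]

theorem sum_appendSlack (u : Fin n → ℝ) : ∑ j, appendSlack u j = 1 := by
  simp [Fin.sum_univ_castSucc, appendSlack_castSucc, appendSlack_last]

theorem appendSlack_comp_castSucc {w : Fin (n + 1) → ℝ} (hw : ∑ j, w j = 1) :
    appendSlack (fun i => w i.castSucc) = w := by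
  funext j
  induction j using Fin.lastCases with
  | last => rw [appendSlack_last, ← hw, Fin.sum_univ_castSucc]; ring
  | cast i => exact appendSlack_castSucc _ i

@[fun_prop]
theorem continuous_appendSlack : Continuous (appendSlack : (Fin n → ℝ) → Fin (n + 1) → ℝ) :=
  continuous_pi fun j => by unfold appendSlack; split <;> fun_prop

end AppendSlack

theorem exists_pos_forall_abs_le_mem_of_mem_nhds {ι : Type*} [Fintype ι]
    {U : Set (ℝ × (ι → ℝ))} (hU : U ∈ 𝓝 0) :
    ∃ α > 0, ∀ (δ₀ : ℝ) (δ : ι → ℝ), |δ₀| ≤ α → (∀ i, |δ i| ≤ α) → (δ₀, δ) ∈ U := by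
  obtain ⟨ε, hε, hball⟩ := Metric.mem_nhds_iff.1 hU
  refine ⟨ε / 2, half_pos hε, fun δ₀ δ h₀ hδ => hball ?_⟩
  have : ‖(δ₀, δ)‖ ≤ ε / 2 :=
    norm_prod_le_iff.2 ⟨h₀, (pi_norm_le_iff_of_nonneg (half_pos hε).le).2 hδ⟩
  rw [mem_ball_zero_iff]
  linarith

/-- Lemma 4 (full dimensionality): for every weighted majority game on `n+1` voters there
are positive reals `q̃, w̃_1, …, w̃_n` and `α > 0` such that every perturbation of the quota
and of the first `n` weights by at most `α` (the last weight taking up the slack so that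
the weights sum to one) yields a normalized representation of the game. -/
theorem exists_interior_normalized_representation (n : ℕ)
    (v : Finset (Fin (n + 1)) → Bool) (hv : IsWMG v) :
    ∃ (q : ℝ) (tw : Fin n → ℝ) (α : ℝ), 0 < q ∧ (∀ i, 0 < tw i) ∧ 0 < α ∧
      ∀ (δ₀ : ℝ) (δ : Fin n → ℝ), |δ₀| ≤ α → (∀ i, |δ i| ≤ α) →
        IsRep v (q + δ₀)
            (fun j : Fin (n + 1) =>
              if h : (j : ℕ) < n then tw ⟨j, h⟩ + δ ⟨j, h⟩
              else 1 - ∑ i, (tw i + δ i)) ∧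
          (∑ j : Fin (n + 1),
              (if h : (j : ℕ) < n then tw ⟨j, h⟩ + δ ⟨j, h⟩
               else 1 - ∑ i, (tw i + δ i))) = 1 ∧
          q + δ₀ ≤ 1 := by
  obtain ⟨⟨-, hfull, -⟩, q₀, w₀, hrep₀⟩ := hv
  obtain ⟨q, w, hstrict, hsum⟩ := hrep₀.exists_isStrictRep_sum_eq_one
  let F : ℝ × (Fin n → ℝ) → ℝ × (Fin (n + 1) → ℝ) :=
    fun p => (q + p.1, appendSlack fun i => w i.castSucc + p.2 i)
  have hF : Continuous F := by fun_prop
  have hF0 : F 0 ∈ {p | IsStrictRep v p.1 p.2} := by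
    simpa [F, appendSlack_comp_castSucc hsum] using hstrict
  obtain ⟨α, hα, hbox⟩ := exists_pos_forall_abs_le_mem_of_mem_nhds
    (((isOpen_setOf_isStrictRep v).preimage hF).mem_nhds hF0)
  refine ⟨q, fun i => w i.castSucc, α, hstrict.1, fun i => hstrict.2.1 _, hα,
    fun δ₀ δ h₀ hδ => ?_⟩
  have hrep : IsRep v (q + δ₀) (appendSlack fun i => w i.castSucc + δ i) :=
    (hbox δ₀ δ h₀ hδ).isRep
  refine ⟨hrep, sum_appendSlack _, ?_⟩
  simpa [sum_appendSlack] using (hrep.2.2 Finset.univ).1 hfull
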